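/- The function α(x) = h(x) + (1-x)·H_{n-1}^max is non-increasing for x ≥ f_{n-1}/f_{n+1}, where h is the binary entropy function and H_{n-1}^max = log₂ f_n - (1/f_n) sum_{i=1}^{n-2} f_i log₂ f_i. -/

import Mathlib

open Finset

/-- Binary entropy function (base 2). -/
noncomputable def binEnt (x : ℝ) : ℝ :=
  -x * Real.logb 2 x - (1 - x) * Real.logb 2 (1 - x)

/-- `H_{n-1}^max = log₂ f n - (1 / f n) ∑_{i=1}^{n-2} f i log₂ (f i)`. -/
noncomputable def HmaxPred (n : ℕ) : ℝ :=
  Real.logb 2 (Nat.fib n : ℝ) -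
    (1 / (Nat.fib n : ℝ)) *
      ∑ i ∈ Finset.Icc 1 (n - 2), (Nat.fib i : ℝ) * Real.logb 2 (Nat.fib i : ℝ)

/-!
On `(0, 1)` the derivative of `x ↦ h(x) + (1 - x) C` is `log₂ ((1 - x) / x) - C`, which
decreases in `x`; so the function decreases on `[a, 1]` as soon as `log₂ ((1 - a) / a) ≤ C`.
For `a = f_{n-1} / f_{n+1}` one has `(1 - a) / a = f_n / f_{n-1}`, and
`log₂ (f_n / f_{n-1}) ≤ H_{n-1}^max` amounts to `∑_{i ≤ n-2} f_i log₂ f_i ≤ f_n log₂ f_{n-1}`,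
which holds termwise because `f_i ≤ f_{n-1}` and `∑_{i ≤ n-2} f_i = f_n - 1`.
-/

open Real

lemma binEnt_eq_binEntropy_div : binEnt = fun x => binEntropy x / log 2 := by
  ext x
  simp only [binEnt, binEntropy, logb, log_inv]
  ring

@[fun_prop]
lemma continuous_binEnt : Continuous binEnt := by
  rw [binEnt_eq_binEntropy_div]
  fun_prop

lemma hasDerivAt_binEnt {x : ℝ} (hx₀ : x ≠ 0) (hx₁ : x ≠ 1) :
    HasDerivAt binEnt (logb 2 (1 - x) - logb 2 x) x := by
  rw [binEnt_eq_binEntropy_div, logb, logb, ← sub_div]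
  exact (hasDerivAt_binEntropy hx₀ hx₁).div_const (log 2)

lemma antitoneOn_binEnt_add_one_sub_mul {a C : ℝ} (ha : 0 < a)
    (hC : logb 2 ((1 - a) / a) ≤ C) :
    AntitoneOn (fun x => binEnt x + (1 - x) * C) (Set.Icc a 1) := by
  have hcont : Continuous fun x => binEnt x + (1 - x) * C := by fun_prop
  refine antitoneOn_of_hasDerivWithinAt_nonpos (convex_Icc a 1) hcont.continuousOn
    (f' := fun x => logb 2 (1 - x) - logb 2 x - C) ?_ ?_ <;> rw [interior_Icc]
  · rintro x ⟨hax, hx1⟩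
    have hline : HasDerivAt (fun x : ℝ => (1 - x) * C) (-C) x := by
      simpa using ((hasDerivAt_id x).const_sub 1).mul_const C
    exact (((hasDerivAt_binEnt (ha.trans hax).ne' hx1.ne).add hline).congr_deriv
      (sub_eq_add_neg _ _).symm).hasDerivWithinAt
  · rintro x ⟨hax, hx1⟩
    have hx0 : 0 < x := ha.trans hax
    have hratio : (1 - x) / x ≤ (1 - a) / a :=
      div_le_div₀ (by linarith) (by linarith) ha hax.le
    have hlogb_ratio := logb_le_logb_of_le one_lt_two (div_pos (by linarith) hx0) hratio
    rw [logb_div (by linarith) hx0.ne'] at hlogb_ratio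
    linarith

lemma cast_fib_pos {k : ℕ} (hk : k ≠ 0) : (0 : ℝ) < Nat.fib k :=
  Nat.cast_pos.mpr (Nat.fib_pos.mpr (Nat.pos_of_ne_zero hk))

lemma sum_fib_Icc_le (n : ℕ) : ∑ i ∈ Icc 1 (n - 2), Nat.fib i ≤ Nat.fib n := by
  rcases Nat.lt_or_ge n 2 with hn | hn
  · simp [Nat.sub_eq_zero_of_le hn.le]
  · obtain ⟨m, rfl⟩ := Nat.exists_eq_add_of_le' hn
    calc ∑ i ∈ Icc 1 (m + 2 - 2), Nat.fib i
        ≤ ∑ i ∈ range (m + 1), Nat.fib i :=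
          sum_le_sum_of_subset fun i hi => by
            simp only [mem_Icc, mem_range] at hi ⊢
            omega
      _ ≤ Nat.fib (m + 2) := by rw [Nat.fib_succ_eq_succ_sum]; omega

lemma sum_fib_mul_logb_fib_le (n : ℕ) :
    ∑ i ∈ Icc 1 (n - 2), (Nat.fib i : ℝ) * logb 2 (Nat.fib i)
      ≤ Nat.fib n * logb 2 (Nat.fib (n - 1)) := by
  calc ∑ i ∈ Icc 1 (n - 2), (Nat.fib i : ℝ) * logb 2 (Nat.fib i)
      ≤ ∑ i ∈ Icc 1 (n - 2), (Nat.fib i : ℝ) * logb 2 (Nat.fib (n - 1)) := by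
        refine sum_le_sum fun i hi => ?_
        rw [mem_Icc] at hi
        have hfib_pos := cast_fib_pos (k := i) (by omega)
        gcongr
        · exact one_lt_two
        · omega
    _ = (∑ i ∈ Icc 1 (n - 2), Nat.fib i : ℕ) * logb 2 (Nat.fib (n - 1)) := by
        push_cast
        rw [sum_mul]
    _ ≤ Nat.fib n * logb 2 (Nat.fib (n - 1)) := by
        gcongr
        · exact div_nonneg (log_natCast_nonneg _) (log_nonneg one_le_two)
        · exact sum_fib_Icc_le n

lemma logb_fib_div_fib_sub_one_le_HmaxPred {n : ℕ} (hn : 2 ≤ n) :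
    logb 2 (Nat.fib n / Nat.fib (n - 1)) ≤ HmaxPred n := by
  rw [logb_div (cast_fib_pos (by omega)).ne' (cast_fib_pos (by omega)).ne', HmaxPred,
    sub_le_sub_iff_left, one_div, inv_mul_le_iff₀ (cast_fib_pos (by omega))]
  exact sum_fib_mul_logb_fib_le n

lemma one_sub_fib_div_fib_div {n : ℕ} (hn : n ≠ 0) :
    (1 - (Nat.fib (n - 1) : ℝ) / Nat.fib (n + 1)) / (Nat.fib (n - 1) / Nat.fib (n + 1))
      = Nat.fib n / Nat.fib (n - 1) := by
  have hfib_succ : (Nat.fib (n + 1) : ℝ) = Nat.fib (n - 1) + Nat.fib n := by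
    exact_mod_cast Nat.fib_add_one hn
  have hpos := cast_fib_pos (k := n + 1) (by omega)
  rw [one_sub_div hpos.ne', div_div_div_cancel_right₀ hpos.ne', hfib_succ, add_sub_cancel_left]

theorem alpha_antitoneOn (n : ℕ) (hn : 4 ≤ n) :
    AntitoneOn (fun x : ℝ => binEnt x + (1 - x) * HmaxPred n)
      (Set.Icc ((Nat.fib (n - 1) : ℝ) / (Nat.fib (n + 1) : ℝ)) 1) := by
  refine antitoneOn_binEnt_add_one_sub_mul
    (div_pos (cast_fib_pos (by omega)) (cast_fib_pos (by omega))) ?_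
  rw [one_sub_fib_div_fib_div (by omega)]
  exact logb_fib_div_fib_sub_one_le_HmaxPred (by omega)
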